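/- The minimal evidence assignment E_m on a frame F, defined by E_m ⊨ e if and only if Φ ⊢ e in the *-calculus over F, is an admissible evidence function, and it is the least admissible evidence function satisfying all expressions in Φ: every admissible evidence function E satisfying Φ satisfies every expression that E_m satisfies. -/
import Mathlib


/- Multi-agent justification logic (Achilleos), self-contained formalization. -/
namespace JL

/-- Justification terms. -/
inductive Tm : Type
  | var : ℕ → Tm
  | const : ℕ → Tm
  | plus : Tm → Tm → Tm
  | app : Tm → Tm → Tm
  | bang : Tm → Tm
deriving DecidableEq

/-- Justification formulas; `just i t φ` is `[t]_i φ`. -/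
inductive Fm : Type
  | bot : Fm
  | pvar : ℕ → Fm
  | imp : Fm → Fm → Fm
  | and : Fm → Fm → Fm
  | or : Fm → Fm → Fm
  | just : ℕ → Tm → Fm → Fm
deriving DecidableEq

def Fm.neg (φ : Fm) : Fm := φ.imp .bot

/-- Propositional evaluation treating `pvar`s and `just`-formulas as atoms. -/
def evalA (v : Fm → Bool) : Fm → Bool
  | .bot => false
  | .pvar n => v (.pvar n)
  | .imp a b => !(evalA v a) || evalA v b
  | .and a b => evalA v a && evalA v b
  | .or a b => evalA v a || evalA v b
  | .just i t φ => v (.just i t φ)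

/-- Propositional tautology. -/
def PropTaut (φ : Fm) : Prop := ∀ v : Fm → Bool, evalA v φ = true

/-- Substitution of terms for justification variables. -/
def Tm.subst (σ : ℕ → Tm) : Tm → Tm
  | .var n => σ n
  | .const c => .const c
  | .plus a b => .plus (a.subst σ) (b.subst σ)
  | .app a b => .app (a.subst σ) (b.subst σ)
  | .bang a => .bang (a.subst σ)

/-- Simultaneous substitution of terms for justification variables and
formulas for propositional variables. -/
def Fm.subst (σ : ℕ → Tm) (τ : ℕ → Fm) : Fm → Fm
  | .bot => .bot
  | .pvar n => τ n
  | .imp a b => .imp (a.subst σ τ) (b.subst σ τ)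
  | .and a b => .and (a.subst σ τ) (b.subst σ τ)
  | .or a b => .or (a.subst σ τ) (b.subst σ τ)
  | .just i t φ => .just i (t.subst σ) (φ.subst σ τ)

/-- The single-agent base logics allowed for each agent. -/
inductive Base : Type
  | J | JD | JT
deriving DecidableEq

/-- The signature `(n, ⊂, ↪, F)` of a multi-agent justification logic.
`sub j i` means `j ⊂ i`; `hook i j` means `i ↪ j`. -/
structure Sig where
  n : ℕ
  sub : ℕ → ℕ → Prop
  hook : ℕ → ℕ → Prop
  F : ℕ → Base

/-- The axioms of `(n, ⊂, ↪, F)`. -/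
inductive IsAxiom (L : Sig) : Fm → Prop
  | taut (φ : Fm) : PropTaut φ → IsAxiom L φ
  | app (i : ℕ) (s t : Tm) (φ ψ : Fm) :
      IsAxiom L ((Fm.just i s (φ.imp ψ)).imp ((Fm.just i t φ).imp (Fm.just i (s.app t) ψ)))
  | sumL (i : ℕ) (s t : Tm) (φ : Fm) :
      IsAxiom L ((Fm.just i s φ).imp (Fm.just i (s.plus t) φ))
  | sumR (i : ℕ) (s t : Tm) (φ : Fm) :
      IsAxiom L ((Fm.just i s φ).imp (Fm.just i (t.plus s) φ))
  | fact (i : ℕ) (t : Tm) (φ : Fm) : L.F i = .JT →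
      IsAxiom L ((Fm.just i t φ).imp φ)
  | cons (i : ℕ) (t : Tm) : L.F i = .JD →
      IsAxiom L ((Fm.just i t Fm.bot).imp Fm.bot)
  | conv (i j : ℕ) (t : Tm) (φ : Fm) : L.sub j i →
      IsAxiom L ((Fm.just i t φ).imp (Fm.just j t φ))
  | ver (i j : ℕ) (t : Tm) (φ : Fm) : L.hook i j →
      IsAxiom L ((Fm.just j t φ).imp (Fm.just i (t.bang) (Fm.just j t φ)))

/-- A constant specification: a set of triples `(i, c, A)` standing for `[c]_i A ∈ CS`. -/
abbrev CSpec := Set (ℕ × Tm × Fm)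

/-- Well-formedness of a constant specification: only constants justifying axioms. -/
def CSWF (L : Sig) (CS : CSpec) : Prop :=
  ∀ e ∈ CS, (∃ c : ℕ, e.2.1 = Tm.const c) ∧ IsAxiom L e.2.2

/-- Instances of the Axiom Necessitation rule. -/
inductive AN (L : Sig) (CS : CSpec) : ℕ → Tm → Fm → Prop
  | base (i c : ℕ) (φ : Fm) : (i, Tm.const c, φ) ∈ CS → AN L CS i (.const c) φ
  | step (i j : ℕ) (t : Tm) (φ : Fm) :
      AN L CS j t φ → AN L CS i (t.bang) (Fm.just j t φ)

/-- Hilbert-style derivability in `J = (n,⊂,↪,F)_CS` from a set `S` of hypotheses. -/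
inductive Deriv (L : Sig) (CS : CSpec) (S : Set Fm) : Fm → Prop
  | hyp (φ : Fm) : φ ∈ S → Deriv L CS S φ
  | ax (φ : Fm) : IsAxiom L φ → Deriv L CS S φ
  | an (i : ℕ) (t : Tm) (φ : Fm) : AN L CS i t φ → Deriv L CS S (Fm.just i t φ)
  | mp (φ ψ : Fm) : Deriv L CS S (φ.imp ψ) → Deriv L CS S φ → Deriv L CS S ψ

/-- `CS` is axiomatically appropriate: every axiom is justified by some constant,
for every agent. -/
def AxAppropriate (L : Sig) (CS : CSpec) : Prop :=
  ∀ φ : Fm, IsAxiom L φ → ∀ i : ℕ, ∃ c : ℕ, (i, Tm.const c, φ) ∈ CS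

/-- `CS` is schematic: constants justify schemes, i.e. `CS` is closed under substitution. -/
def Schematic (L : Sig) (CS : CSpec) : Prop :=
  ∀ i c φ, (i, Tm.const c, φ) ∈ CS → ∀ (σ : ℕ → Tm) (τ : ℕ → Fm),
    (i, Tm.const c, φ.subst σ τ) ∈ CS

/-- `!`-freeness of a term. -/
def Tm.bangFree : Tm → Prop
  | .bang _ => False
  | .plus a b => a.bangFree ∧ b.bangFree
  | .app a b => a.bangFree ∧ b.bangFree
  | _ => True

/-- Number of occurrences of `s` in the syntax tree of a term. -/
def occ (s : Tm) : Tm → ℕ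
  | .plus a b => if Tm.plus a b = s then 1 else occ s a + occ s b
  | .app a b => if Tm.app a b = s then 1 else occ s a + occ s b
  | .bang a => if Tm.bang a = s then 1 else occ s a
  | t => if t = s then 1 else 0

/-- `c` occurs as a constant in the term. -/
def ConstOcc (c : ℕ) : Tm → Prop
  | .const d => d = c
  | .plus a b => ConstOcc c a ∨ ConstOcc c b
  | .app a b => ConstOcc c a ∨ ConstOcc c b
  | .bang a => ConstOcc c a
  | .var _ => False

/-- Classical propositional derivability (hypotheses, tautologies, modus ponens),
treating `just`-formulas as atoms. -/
inductive PropDeriv (S : Set Fm) : Fm → Prop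
  | hyp (φ : Fm) : φ ∈ S → PropDeriv S φ
  | taut (φ : Fm) : PropTaut φ → PropDeriv S φ
  | mp (φ ψ : Fm) : PropDeriv S (φ.imp ψ) → PropDeriv S φ → PropDeriv S ψ

/-! ### Fitting semantics -/

/-- Frame conditions for `(n,⊂,↪,F)`. -/
structure IsFrame (L : Sig) {W : Type} (R : ℕ → W → W → Prop) : Prop where
  refl : ∀ i, L.F i = .JT → ∀ a, R i a a
  serial : ∀ i, L.F i = .JD → ∀ a, ∃ b, R i a b
  hookTrans : ∀ i j a b c, L.hook i j → R i a b → R j b c → R j a c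
  subMono : ∀ i j a b, L.sub i j → R i a b → R j a b

/-- Admissible evidence function conditions. -/
structure IsAEF (L : Sig) (CS : CSpec) {W : Type} (R : ℕ → W → W → Prop)
    (E : ℕ → Tm → Fm → Set W) : Prop where
  appC : ∀ i s t φ ψ, E i s (φ.imp ψ) ∩ E i t φ ⊆ E i (s.app t) ψ
  sumC : ∀ i s t φ, E i t φ ∪ E i s φ ⊆ E i (t.plus s) φ
  anC : ∀ i t φ, AN L CS i t φ → E i t φ = Set.univ
  verC : ∀ i j t φ, L.hook i j → E j t φ ⊆ E i (t.bang) (Fm.just j t φ)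
  convC : ∀ i j t φ, L.sub i j → E j t φ ⊆ E i t φ
  disC : ∀ i j t φ a b, L.hook j i → R j a b → a ∈ E i t φ → b ∈ E i t φ

/-- A Fitting model for `(n,⊂,↪,F)_CS`. -/
structure FModel (L : Sig) (CS : CSpec) where
  W : Type
  ne : Nonempty W
  R : ℕ → W → W → Prop
  E : ℕ → Tm → Fm → Set W
  V : ℕ → Set W
  frame : IsFrame L R
  aef : IsAEF L CS R E

/-- Truth in a Fitting model. -/
def FModel.sat {L : Sig} {CS : CSpec} (M : FModel L CS) : M.W → Fm → Prop
  | _, .bot => False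
  | w, .pvar n => w ∈ M.V n
  | w, .imp a b => M.sat w a → M.sat w b
  | w, .and a b => M.sat w a ∧ M.sat w b
  | w, .or a b => M.sat w a ∨ M.sat w b
  | w, .just i t φ => w ∈ M.E i t φ ∧ ∀ v, M.R i w v → M.sat v φ

/-- Satisfiability in the logic `(n,⊂,↪,F)_CS`. -/
def Satisfiable (L : Sig) (CS : CSpec) (φ : Fm) : Prop :=
  ∃ (M : FModel L CS) (w : M.W), M.sat w φ

/-! ### The `*`-calculus over a frame -/

/-- World-prefixed `*`-expressions: `(w, i, t, φ)` stands for `w *_i(t,φ)`. -/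
abbrev StarExp (W : Type) := W × ℕ × Tm × Fm

/-- The `*`-calculus over a frame `(W, R)`, from premises `S`. -/
inductive StarDeriv (L : Sig) (CS : CSpec) {W : Type} (R : ℕ → W → W → Prop)
    (S : Set (StarExp W)) : StarExp W → Prop
  | hyp (e : StarExp W) : e ∈ S → StarDeriv L CS R S e
  | an (w : W) (i : ℕ) (t : Tm) (φ : Fm) :
      AN L CS i t φ → StarDeriv L CS R S (w, i, t, φ)
  | app (w : W) (i : ℕ) (s t : Tm) (φ ψ : Fm) :
      StarDeriv L CS R S (w, i, s, φ.imp ψ) → StarDeriv L CS R S (w, i, t, φ) →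
      StarDeriv L CS R S (w, i, s.app t, ψ)
  | sumL (w : W) (i : ℕ) (s t : Tm) (φ : Fm) :
      StarDeriv L CS R S (w, i, s, φ) → StarDeriv L CS R S (w, i, s.plus t, φ)
  | sumR (w : W) (i : ℕ) (s t : Tm) (φ : Fm) :
      StarDeriv L CS R S (w, i, s, φ) → StarDeriv L CS R S (w, i, t.plus s, φ)
  | ver (w : W) (i j : ℕ) (t : Tm) (φ : Fm) : L.hook i j →
      StarDeriv L CS R S (w, j, t, φ) →
      StarDeriv L CS R S (w, i, t.bang, Fm.just j t φ)
  | conv (w : W) (i j : ℕ) (t : Tm) (φ : Fm) : L.sub i j →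
      StarDeriv L CS R S (w, j, t, φ) → StarDeriv L CS R S (w, i, t, φ)
  | dis (a b : W) (i j : ℕ) (t : Tm) (φ : Fm) : L.hook j i → R j a b →
      StarDeriv L CS R S (a, i, t, φ) → StarDeriv L CS R S (b, i, t, φ)

/-- An evidence assignment satisfies a `*`-expression. -/
def satE {W : Type} (E : ℕ → Tm → Fm → Set W) (e : StarExp W) : Prop :=
  e.1 ∈ E e.2.1 e.2.2.1 e.2.2.2

end JL

namespace JL

/-- The minimal evidence assignment `E_m` on a frame, defined by
`E_m ⊨ e` iff `Φ ⊢ e` in the `*`-calculus over the frame, is an admissible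
evidence function; it satisfies all of `Φ`, and it is least among the admissible
evidence functions satisfying `Φ`. -/
theorem minimal_aef (L : Sig) (CS : CSpec) {W : Type}
    (R : ℕ → W → W → Prop) (hF : IsFrame L R) (Φ : Set (StarExp W)) :
    IsAEF L CS R (fun i t φ => {w | StarDeriv L CS R Φ (w, i, t, φ)}) ∧
    (∀ f ∈ Φ, satE (fun i t φ => {w | StarDeriv L CS R Φ (w, i, t, φ)}) f) ∧
    (∀ E : ℕ → Tm → Fm → Set W, IsAEF L CS R E → (∀ f ∈ Φ, satE E f) →
      ∀ (w : W) (i : ℕ) (t : Tm) (φ : Fm),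
        StarDeriv L CS R Φ (w, i, t, φ) → w ∈ E i t φ) := by
  refine ⟨⟨?_, ?_, ?_, ?_, ?_, ?_⟩, ?_, ?_⟩
  · rintro i s t φ ψ _ ⟨h1, h2⟩
    exact StarDeriv.app _ _ _ _ _ _ h1 h2
  · rintro i s t φ _ (h | h)
    · exact StarDeriv.sumL _ _ _ _ _ h
    · exact StarDeriv.sumR _ _ _ _ _ h
  · intro i t φ h
    ext w; simp [StarDeriv.an w i t φ h]
  · intro i j t φ h w hw
    exact StarDeriv.ver _ _ _ _ _ h hw
  · intro i j t φ h w hw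
    exact StarDeriv.conv _ _ _ _ _ h hw
  · intro i j t φ a b h hR ha
    exact StarDeriv.dis _ _ _ _ _ _ h hR ha
  · rintro ⟨w, i, t, φ⟩ hf
    exact StarDeriv.hyp _ hf
  · intro E hE hΦ w i t φ hd
    suffices h : ∀ e, StarDeriv L CS R Φ e → satE E e from h (w, i, t, φ) hd
    intro e hd
    induction hd with
    | hyp e he => exact hΦ e he
    | an w i t φ h => show w ∈ E i t φ; rw [hE.anC i t φ h]; trivial
    | app w i s t φ ψ _ _ ih1 ih2 => exact hE.appC i s t φ ψ ⟨ih1, ih2⟩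
    | sumL w i s t φ _ ih => exact hE.sumC i t s φ (Set.mem_union_left _ ih)
    | sumR w i s t φ _ ih => exact hE.sumC i s t φ (Set.mem_union_right _ ih)
    | ver w i j t φ h _ ih => exact hE.verC i j t φ h ih
    | conv w i j t φ h _ ih => exact hE.convC i j t φ h ih
    | dis a b i j t φ h hR _ ih => exact hE.disC i j t φ a b h hR ih


end JL
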